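/- arXiv:2205.02004 — 2 statements merged into one kernel-verified Lean document; each statement's English description precedes it below -/
import Mathlib

section
/- (Key Lemma) Let Bv = λv with |λ| = 1, and let k = i_0, i_1, …, i_p = l be a non-backtracking chain of length p in G, meaning deg(k) > 2, deg(l) > 2, and deg(i_j) = 2 for 0 < j < p. If v is nonzero on at least one of the oriented edges i_j → i_{j+1}, then v is nonzero on all of them, and λ^{2p} = 1. -/
/-!
Write `S u` for the sum of `v` over the darts entering `u`, so that `(Bv)(a → b) = S a - v(b → a)`.
Reindexing by reversal, `Bv = λv` with `|λ| = 1` gives `∑_d |S(d.snd) - v d|² = ∑_d |v d|²`, and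
expanding the left side turns this into `∑_u (deg u - 2) |S u|² = 0`. With minimum degree 2 this
forces `S u = 0` at every vertex of degree `> 2`.

Along the chain, an interior vertex of degree 2 passes values on with a factor `λ` in either
direction, while at an endpoint `S = 0` reflects the chain with a factor `-λ`. Going along the chain
and back multiplies the value on its last forward edge by `λ^(2p)`, and every value on a forward
edge is a power of `λ` times that one.
-/

open SimpleGraph Matrix

/-- The non-backtracking matrix of a simple graph, indexed by oriented edges (darts). -/
def nbMatrix {V : Type} [Fintype V] [DecidableEq V] (G : SimpleGraph V) [DecidableRel G.Adj] :
    Matrix G.Dart G.Dart ℂ :=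
  fun d e => if e.toProd.2 = d.toProd.1 ∧ e.toProd.1 ≠ d.toProd.2 then 1 else 0

open Finset Complex ComplexConjugate

namespace SimpleGraph

variable {V : Type} (G : SimpleGraph V) [DecidableRel G.Adj]

-- Extending `v` by zero to non-adjacent pairs lets a chain be indexed by `ℕ` without adjacency
-- proofs.
def pairValue {M : Type*} [Zero M] (v : G.Dart → M) (a b : V) : M :=
  if h : G.Adj a b then v ⟨(a, b), h⟩ else 0

theorem pairValue_of_adj {M : Type*} [Zero M] (v : G.Dart → M) {a b : V} (h : G.Adj a b) :
    G.pairValue v a b = v ⟨(a, b), h⟩ :=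
  dif_pos h

variable [Fintype V] [DecidableEq V]

-- The paper's `∑ᵢ a_{iu} v_{i→u}`.
def inflow {M : Type*} [AddCommMonoid M] (v : G.Dart → M) (u : V) : M :=
  ∑ d with d.snd = u, v d

theorem dart_snd_fiber_card_eq_degree (u : V) : #{d : G.Dart | d.snd = u} = G.degree u := by
  rw [← dart_fst_fiber_card_eq_degree]
  exact card_nbij' Dart.symm Dart.symm (fun _ ↦ by simp [Dart.symm]) (fun _ ↦ by simp [Dart.symm])
    (fun d _ ↦ d.symm_symm) (fun d _ ↦ d.symm_symm)

theorem sum_dart_snd_eq_sum_degree_smul {M : Type*} [AddCommMonoid M] (f : V → M) :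
    ∑ d : G.Dart, f d.snd = ∑ u, G.degree u • f u := by
  rw [← sum_fiberwise univ (fun d : G.Dart ↦ d.snd)]
  refine sum_congr rfl fun u _ ↦ ?_
  rw [sum_congr rfl fun d hd ↦ congrArg f (mem_filter.1 hd).2, sum_const,
    dart_snd_fiber_card_eq_degree]

theorem nbMatrix_mulVec_apply (v : G.Dart → ℂ) (d : G.Dart) :
    (nbMatrix G *ᵥ v) d = G.inflow v d.fst - v d.symm := by
  have hback : ({e : G.Dart | e.snd = d.fst ∧ ¬e.fst ≠ d.snd} : Finset _) = {d.symm} := by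
    ext e
    simp [Dart.ext_iff, Prod.ext_iff, Dart.symm, and_comm]
  rw [eq_sub_iff_add_eq, inflow, ← sum_filter_add_sum_filter_not _ (fun e : G.Dart ↦ e.fst ≠ d.snd),
    filter_filter, filter_filter, hback, sum_singleton, sum_filter]
  simp only [mulVec, dotProduct, nbMatrix, ite_mul, one_mul, zero_mul]

theorem sum_normSq_inflow_sub (v : G.Dart → ℂ) :
    ∑ d, normSq (G.inflow v d.snd - v d)
      = ∑ u, ((G.degree u : ℝ) - 2) * normSq (G.inflow v u) + ∑ d, normSq (v d) := by
  have hcross : ∑ d, (G.inflow v d.snd * conj (v d)).re = ∑ u, normSq (G.inflow v u) := by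
    rw [← sum_fiberwise univ (fun d : G.Dart ↦ d.snd)]
    refine sum_congr rfl fun u _ ↦ ?_
    rw [sum_congr rfl fun d hd ↦ by rw [(mem_filter.1 hd).2], ← re_sum, ← mul_sum, ← map_sum]
    exact congrArg re (mul_conj _)
  simp only [normSq_sub, sum_sub_distrib, sum_add_distrib, ← mul_sum, hcross,
    sum_dart_snd_eq_sum_degree_smul G (fun u ↦ normSq (G.inflow v u)), nsmul_eq_mul, sub_mul]
  ring

theorem inflow_eq_add_of_degree_eq_two {M : Type*} [AddCommMonoid M] (v : G.Dart → M) {u a b : V}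
    (hu : G.degree u = 2) (hab : a ≠ b) (ha : G.Adj a u) (hb : G.Adj b u) :
    G.inflow v u = G.pairValue v a u + G.pairValue v b u := by
  have hne : (⟨(a, u), ha⟩ : G.Dart) ≠ ⟨(b, u), hb⟩ := fun h ↦ hab congr(($h).fst)
  have hfiber : ({d : G.Dart | d.snd = u} : Finset _) = {⟨(a, u), ha⟩, ⟨(b, u), hb⟩} := by
    refine (eq_of_subset_of_card_le ?_ ?_).symm
    · intro d
      simp only [mem_insert, mem_singleton, mem_filter, mem_univ, true_and]
      rintro (rfl | rfl) <;> rfl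
    · rw [dart_snd_fiber_card_eq_degree, hu, card_pair hne]
  rw [inflow, hfiber, sum_pair hne, G.pairValue_of_adj v ha, G.pairValue_of_adj v hb]

variable {G} {v : G.Dart → ℂ} {lam : ℂ}

theorem inflow_fst_sub_symm_of_mulVec_eq (hv : nbMatrix G *ᵥ v = lam • v) (d : G.Dart) :
    G.inflow v d.fst - v d.symm = lam * v d := by
  rw [← nbMatrix_mulVec_apply, hv, Pi.smul_apply, smul_eq_mul]

theorem inflow_eq_zero_of_two_lt_degree (hmin : ∀ x, 2 ≤ G.degree x) (hlam : ‖lam‖ = 1)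
    (hv : nbMatrix G *ᵥ v = lam • v) {u : V} (hu : 2 < G.degree u) : G.inflow v u = 0 := by
  have hbalance : ∑ d, normSq (G.inflow v d.snd - v d) = ∑ d, normSq (v d) :=
    calc ∑ d, normSq (G.inflow v d.snd - v d) = ∑ d, normSq (lam * v d.symm) :=
          sum_congr rfl fun d _ ↦ by
            rw [← inflow_fst_sub_symm_of_mulVec_eq hv d.symm, d.symm_symm]
            rfl
      _ = ∑ d : G.Dart, normSq (v d.symm) := by
            simp only [normSq_mul, normSq_eq_norm_sq lam, hlam, one_pow, one_mul]
      _ = ∑ d, normSq (v d) := Equiv.sum_comp (Dart.symm_involutive.toPerm _) (fun d ↦ normSq (v d))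
  have hzero : ∑ w, ((G.degree w : ℝ) - 2) * normSq (G.inflow v w) = 0 := by
    linarith [sum_normSq_inflow_sub G v]
  have hnonneg (w : V) : 0 ≤ ((G.degree w : ℝ) - 2) * normSq (G.inflow v w) :=
    mul_nonneg (sub_nonneg.2 (by exact_mod_cast hmin w)) (normSq_nonneg _)
  have hu' := (sum_eq_zero_iff_of_nonneg fun w _ ↦ hnonneg w).1 hzero u (mem_univ u)
  rw [mul_eq_zero, sub_eq_zero, normSq_eq_zero] at hu'
  exact hu'.resolve_left (by exact_mod_cast hu.ne')

theorem pairValue_eq_mul_of_degree_eq_two (hv : nbMatrix G *ᵥ v = lam • v) {u a b : V}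
    (hu : G.degree u = 2) (hab : a ≠ b) (ha : G.Adj a u) (hb : G.Adj u b) :
    G.pairValue v a u = lam * G.pairValue v u b := by
  have h : G.inflow v u - v ⟨(b, u), hb.symm⟩ = lam * v ⟨(u, b), hb⟩ :=
    inflow_fst_sub_symm_of_mulVec_eq hv ⟨(u, b), hb⟩
  rwa [G.inflow_eq_add_of_degree_eq_two v hu hab ha hb.symm, G.pairValue_of_adj v hb.symm,
    add_sub_cancel_right, ← G.pairValue_of_adj v hb] at h

theorem pairValue_eq_neg_mul_of_inflow_eq_zero (hv : nbMatrix G *ᵥ v = lam • v) {u b : V}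
    (hu : G.inflow v u = 0) (hb : G.Adj u b) :
    G.pairValue v b u = -(lam * G.pairValue v u b) := by
  have h : G.inflow v u - v ⟨(b, u), hb.symm⟩ = lam * v ⟨(u, b), hb⟩ :=
    inflow_fst_sub_symm_of_mulVec_eq hv ⟨(u, b), hb⟩
  rw [G.pairValue_of_adj v hb.symm, G.pairValue_of_adj v hb, ← h, hu, zero_sub, neg_neg]

end SimpleGraph

theorem eq_pow_sub_mul_of_forall_eq_mul_succ {M : Type*} [Monoid M] {x : ℕ → M} {r : M} {q : ℕ}
    (h : ∀ j < q, x j = r * x (j + 1)) {j : ℕ} (hj : j ≤ q) : x j = r ^ (q - j) * x q := by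
  have key (k : ℕ) (hk : j + k ≤ q) : x j = r ^ k * x (j + k) := by
    induction k with
    | zero => simp
    | succ k ih => rw [ih (by omega), h (j + k) (by omega), pow_succ, mul_assoc, add_assoc]
  simpa [Nat.add_sub_cancel' hj] using key (q - j) (by omega)

theorem eq_pow_mul_of_forall_succ_eq_mul {M : Type*} [Monoid M] {x : ℕ → M} {r : M} {q : ℕ}
    (h : ∀ j < q, x (j + 1) = r * x j) {j : ℕ} (hj : j ≤ q) : x j = r ^ j * x 0 := by
  induction j with
  | zero => simp
  | succ j ih => rw [h j (by omega), ih (by omega), pow_succ', mul_assoc]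

/-- **Key Lemma.** Let Bv = λv with |λ| = 1, and let `c 0, …, c p` be a non-backtracking
chain: endpoints of degree > 2, interior nodes of degree exactly 2. If v is nonzero on at
least one of the oriented edges `c j → c (j+1)` of the chain, then it is nonzero on all of
them, and `λ^(2p) = 1`. -/
theorem key_lemma {V : Type} [Fintype V] [DecidableEq V]
    (G : SimpleGraph V) [DecidableRel G.Adj] (hmin : ∀ x : V, 2 ≤ G.degree x)
    (v : G.Dart → ℂ) (lam : ℂ) (hlam : ‖lam‖ = 1)
    (hv : (nbMatrix G).mulVec v = lam • v)
    (p : ℕ) (hp : 0 < p) (c : ℕ → V)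
    (hadj : ∀ j, j < p → G.Adj (c j) (c (j + 1)))
    (hnb : ∀ j, j + 2 ≤ p → c (j + 2) ≠ c j)
    (hk : 2 < G.degree (c 0)) (hl : 2 < G.degree (c p))
    (hmid : ∀ j, 0 < j → j < p → G.degree (c j) = 2)
    (hne : ∃ j, ∃ h : j < p, v ⟨(c j, c (j + 1)), hadj j h⟩ ≠ 0) :
    (∀ j, ∀ h : j < p, v ⟨(c j, c (j + 1)), hadj j h⟩ ≠ 0) ∧ lam ^ (2 * p) = 1 := by
  obtain ⟨q, rfl⟩ := Nat.exists_eq_add_one.2 hp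
  set E : ℕ → ℂ := fun j ↦ G.pairValue v (c j) (c (j + 1))
  set F : ℕ → ℂ := fun j ↦ G.pairValue v (c (j + 1)) (c j)
  have hEstep : ∀ j < q, E j = lam * E (j + 1) := fun j hj ↦
    pairValue_eq_mul_of_degree_eq_two hv (hmid (j + 1) j.succ_pos (by omega))
      (hnb j (by omega)).symm (hadj j (by omega)) (hadj (j + 1) (by omega))
  have hFstep : ∀ j < q, F (j + 1) = lam * F j := fun j hj ↦
    pairValue_eq_mul_of_degree_eq_two hv (hmid (j + 1) j.succ_pos (by omega))
      (hnb j (by omega)) (hadj (j + 1) (by omega)).symm (hadj j (by omega)).symm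
  have hstart : F 0 = -(lam * E 0) := pairValue_eq_neg_mul_of_inflow_eq_zero hv
    (inflow_eq_zero_of_two_lt_degree hmin hlam hv hk) (hadj 0 hp)
  have hend : E q = -(lam * F q) := pairValue_eq_neg_mul_of_inflow_eq_zero hv
    (inflow_eq_zero_of_two_lt_degree hmin hlam hv hl) (hadj q q.lt_succ_self).symm
  have hchain (j : ℕ) (h : j < q + 1) : v ⟨(c j, c (j + 1)), hadj j h⟩ = lam ^ (q - j) * E q := by
    rw [← G.pairValue_of_adj v (hadj j h)]
    exact eq_pow_sub_mul_of_forall_eq_mul_succ hEstep (by omega)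
  have hlam0 : lam ≠ 0 := norm_ne_zero_iff.1 (hlam ▸ one_ne_zero)
  have hEq : E q ≠ 0 := by
    obtain ⟨j, hj, hvj⟩ := hne
    exact right_ne_zero_of_mul (hchain j hj ▸ hvj)
  refine ⟨fun j h ↦ hchain j h ▸ mul_ne_zero (pow_ne_zero _ hlam0) hEq, mul_right_cancel₀ hEq ?_⟩
  have hE0 : E 0 = lam ^ q * E q := eq_pow_sub_mul_of_forall_eq_mul_succ hEstep q.zero_le
  calc lam ^ (2 * (q + 1)) * E q = -(lam * (lam ^ q * -(lam * (lam ^ q * E q)))) := by ring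
    _ = 1 * E q := by
      rw [← hE0, ← hstart, ← eq_pow_mul_of_forall_succ_eq_mul hFstep le_rfl, ← hend, one_mul]
end

section
/- (Non-leaky gluing) Let G and H be graphs with minimum degree ≥ 2, and let v be an eigenfunction of B_G with unitary eigenvalue λ. Let N = {k ∈ V(G) : Σ_i a_{ik} v_{i→k} = 0}, and form X by identifying some nodes of N with nodes of H (each identified pair consisting of one node of N and one node of H), keeping E(X) = E(G) ⊔ E(H). Then λ is an eigenvalue of B_X, with eigenfunction u equal to v on the edges coming from G and zero on the edges coming from H. -/
/-!
Let `u` be `v` extended by zero. On a dart of `G`, `(B_X u)` agrees with `(B_G v) = λ v`, since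
`u` vanishes on the darts of `H`. On a dart `k → l` of `H`, the non-backtracking constraint
`i ≠ l` is automatic for darts `i → k` of `G`, because the edge `kl` is not in `G`; so
`(B_X u)_{k→l}` is the total flow of `v` into `k`. This flow vanishes: by hypothesis when `k`
is a glued node, and trivially when no edge of `G` ends at `k`.
-/

open SimpleGraph Matrix

/-- Extension by zero of a function on the darts of a subgraph `G ≤ X` to the darts of `X`. -/
noncomputable def extendByZero {V : Type} [Fintype V] [DecidableEq V]
    (G X : SimpleGraph V) [DecidableRel G.Adj] (v : G.Dart → ℂ) (D : X.Dart) : ℂ :=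
  if h : G.Adj D.toProd.1 D.toProd.2 then v ⟨D.toProd, h⟩ else 0

namespace SimpleGraph

lemma mapDart_ofLE_injective {V : Type} {G X : SimpleGraph V} (hle : G ≤ X) :
    Function.Injective (Hom.ofLE hle).mapDart :=
  fun _ _ h => Dart.ext _ _ (by simpa using congrArg Dart.toProd h)

variable {V : Type} [Fintype V] {G X : SimpleGraph V} [DecidableRel G.Adj]

lemma sum_darts_eq_of_le [DecidableRel X.Adj] (hle : G ≤ X) (F : X.Dart → ℂ)
    (hF : ∀ D : X.Dart, ¬G.Adj D.fst D.snd → F D = 0) :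
    ∑ e : G.Dart, F ((Hom.ofLE hle).mapDart e) = ∑ D : X.Dart, F D :=
  Fintype.sum_of_injective _ (mapDart_ofLE_injective hle) _ _
    (fun D hD => hF D fun h => hD ⟨⟨D.toProd, h⟩, rfl⟩) fun _ => rfl

variable [DecidableEq V]

lemma extendByZero_of_adj (v : G.Dart → ℂ) {D : X.Dart} (h : G.Adj D.fst D.snd) :
    extendByZero G X v D = v ⟨D.toProd, h⟩ :=
  dif_pos h

lemma extendByZero_of_not_adj (v : G.Dart → ℂ) {D : X.Dart} (h : ¬G.Adj D.fst D.snd) :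
    extendByZero G X v D = 0 :=
  dif_neg h

lemma extendByZero_mapDart_ofLE (hle : G ≤ X) (v : G.Dart → ℂ) (e : G.Dart) :
    extendByZero G X v ((Hom.ofLE hle).mapDart e) = v e :=
  extendByZero_of_adj v e.adj

lemma extendByZero_ne_zero (hle : G ≤ X) {v : G.Dart → ℂ} (hv : v ≠ 0) :
    extendByZero G X v ≠ 0 := by
  obtain ⟨e, he⟩ := Function.ne_iff.mp hv
  exact Function.ne_iff.mpr ⟨(Hom.ofLE hle).mapDart e, by rwa [extendByZero_mapDart_ofLE]⟩

lemma nbMatrix_mulVec_apply_s19 (v : G.Dart → ℂ) (d : G.Dart) :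
    (nbMatrix G *ᵥ v) d = ∑ e : G.Dart, if e.snd = d.fst ∧ e.fst ≠ d.snd then v e else 0 :=
  Finset.sum_congr rfl fun e _ => by simp only [nbMatrix, ite_mul, one_mul, zero_mul]

lemma nbMatrix_mulVec_extendByZero [DecidableRel X.Adj] (hle : G ≤ X) (v : G.Dart → ℂ)
    (d : X.Dart) :
    (nbMatrix X *ᵥ extendByZero G X v) d =
      ∑ e : G.Dart, if e.snd = d.fst ∧ e.fst ≠ d.snd then v e else 0 := by
  rw [mulVec, dotProduct, ← sum_darts_eq_of_le hle]
  · refine Finset.sum_congr rfl fun e _ => ?_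
    rw [extendByZero_mapDart_ofLE, nbMatrix, ite_mul, one_mul, zero_mul]
    rfl
  · intro D hD
    rw [extendByZero_of_not_adj v hD, mul_zero]

lemma sum_inflow_eq_zero_of_isolated (v : G.Dart → ℂ) {k : V} (hk : ∀ x, ¬G.Adj k x) :
    (∑ e : G.Dart, if e.snd = k then v e else 0) = 0 :=
  Finset.sum_eq_zero fun e _ => if_neg fun (h : e.snd = k) => hk e.fst (h ▸ e.adj.symm)

lemma sum_nonbacktracking_eq_inflow {H : SimpleGraph V} (hdisj : Disjoint G H) (v : G.Dart → ℂ)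
    {a b : V} (hab : H.Adj a b) :
    (∑ e : G.Dart, if e.snd = a ∧ e.fst ≠ b then v e else 0) =
      ∑ e : G.Dart, if e.snd = a then v e else 0 := by
  refine Finset.sum_congr rfl fun e _ => if_congr ?_ rfl rfl
  refine and_iff_left_of_imp fun he hb => disjoint_left.mp hdisj a b ?_ hab
  simpa [← he, ← hb] using e.adj.symm

end SimpleGraph

theorem non_leaky_gluing_general {V : Type} [Fintype V] [DecidableEq V]
    (G H : SimpleGraph V) [DecidableRel G.Adj] [DecidableRel H.Adj]
    (hdisj : Disjoint G H)
    (v : G.Dart → ℂ) (hv0 : v ≠ 0) (lam : ℂ)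
    (hv : (nbMatrix G).mulVec v = lam • v)
    (hglue : ∀ k : V, (∃ x, G.Adj k x) → (∃ y, H.Adj k y) →
      (∑ e : G.Dart, if e.toProd.2 = k then v e else 0) = 0) :
    extendByZero G (G ⊔ H) v ≠ 0 ∧
    (nbMatrix (G ⊔ H)).mulVec (extendByZero G (G ⊔ H) v) =
      lam • extendByZero G (G ⊔ H) v := by
  refine ⟨extendByZero_ne_zero le_sup_left hv0, funext fun d => ?_⟩
  rw [nbMatrix_mulVec_extendByZero le_sup_left, Pi.smul_apply]
  rcases (sup_adj G H _ _).mp d.adj with hG | hH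
  · rw [extendByZero_of_adj v hG, ← Pi.smul_apply, ← hv, nbMatrix_mulVec_apply_s19]
  · rw [extendByZero_of_not_adj v fun hG => disjoint_left.mp hdisj _ _ hG hH, smul_zero,
      sum_nonbacktracking_eq_inflow hdisj v hH]
    by_cases hk : ∃ x, G.Adj d.fst x
    · exact hglue _ hk ⟨_, hH⟩
    · exact sum_inflow_eq_zero_of_isolated v (not_exists.mp hk)

/-- **Non-leaky gluing.** Model the gluing of a graph `G` to a graph `H` along nodes of
`N(G, v) = {k : (v into k) = 0}` by realizing `G` and `H` as edge-disjoint (spanning)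
subgraphs of the glued graph `X = G ⊔ H`: the identified nodes are exactly those incident
to both an edge of `G` and an edge of `H`, and every such node is required to lie in
`N(G, v)`; the edge set of `X` is the disjoint union of those of `G` and `H`.  If `G` and
`H` have minimum degree ≥ 2 (on the nodes they touch) and `v` is an eigenfunction of `B_G`
with unitary eigenvalue `λ`, then `λ` is an eigenvalue of `B_X`, with eigenfunction `u`
equal to `v` on the darts coming from `G` and zero on the darts coming from `H`. -/
theorem non_leaky_gluing {V : Type} [Fintype V] [DecidableEq V]
    (G H : SimpleGraph V) [DecidableRel G.Adj] [DecidableRel H.Adj]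
    (hdisj : Disjoint G H)
    (hGmin : ∀ k : V, (∃ x, G.Adj k x) → 2 ≤ G.degree k)
    (hHmin : ∀ k : V, (∃ y, H.Adj k y) → 2 ≤ H.degree k)
    (v : G.Dart → ℂ) (hv0 : v ≠ 0) (lam : ℂ) (hlam : ‖lam‖ = 1)
    (hv : (nbMatrix G).mulVec v = lam • v)
    (hglue : ∀ k : V, (∃ x, G.Adj k x) → (∃ y, H.Adj k y) →
      (∑ e : G.Dart, if e.toProd.2 = k then v e else 0) = 0) :
    extendByZero G (G ⊔ H) v ≠ 0 ∧
    (nbMatrix (G ⊔ H)).mulVec (extendByZero G (G ⊔ H) v) =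
      lam • extendByZero G (G ⊔ H) v :=
  non_leaky_gluing_general G H hdisj v hv0 lam hv hglue
end
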